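/- Suppose that λ is a regular uncountable cardinal that is not weakly compact (i.e., λ ↛ (λ)^2_2, so there is c : [λ]^2 → 2 that is not constant on [H]^2 for any H ∈ [λ]^λ). Then there exists a family ⟨u_b : b ∈ [λ]^2⟩ of finite sets of ordinals that is a 2-dimensional Δ-system, yet there is no H ∈ [λ]^λ for which ⟨u_b : b ∈ [H]^2⟩ is a uniform 2-dimensional Δ-system. -/

import Mathlib

/-! Fix a colouring `c : [λ]² → 2` with no homogeneous set of size `λ`. Code the pair `{α < β}`
by the ordinal `λ·β + α` and let `u_b` be `{2·code(b)}` when `c(b) = 0` and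
`{2·code(b), 2·code(b) + 1}` when `c(b) = 1`. Distinct pairs get disjoint sets, so `⟨u_b⟩` is a
Δ-system whose roots are `u_b` (when `b = b'`) and `∅`. In a uniform Δ-system all `u_b` have the
same order type, but on every `H ∈ [λ]^λ` both colours occur, hence both order types `1` and `2`. -/

open Cardinal Set

noncomputable section

/-- The order type of a set of ordinals. -/
noncomputable def otp (s : Set Ordinal.{0}) : Ordinal.{0} :=
  sInf {o : Ordinal.{0} | Nonempty (s ≃o Set.Iio o)}

/-- The `i`-th element of a set of ordinals, in increasing order. -/
noncomputable def nth (s : Set Ordinal.{0}) (i : Ordinal.{0}) : Ordinal.{0} :=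
  sInf {α | α ∈ s ∧ otp (s ∩ Set.Iio α) = i}

/-- `a[m] = {a(i) : i ∈ m}`. -/
noncomputable def img (a m : Set Ordinal.{0}) : Set Ordinal.{0} := nth a '' m

/-- Two sets of ordinals are aligned. -/
def Aligned (a b : Set Ordinal.{0}) : Prop :=
  otp a = otp b ∧ ∀ γ ∈ a ∩ b, otp (a ∩ Set.Iio γ) = otp (b ∩ Set.Iio γ)

/-- `r(a,b) = {i < otp a | a(i) ∈ b}`. -/
noncomputable def idx (a b : Set Ordinal.{0}) : Set Ordinal.{0} :=
  {i | i < otp a ∧ nth a i ∈ b}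

/-- `[H]^n`: the `n`-element subsets of `H`. -/
def sizeN (H : Set Ordinal.{0}) (n : ℕ) : Set (Set Ordinal.{0}) :=
  {b | b ⊆ H ∧ b.Finite ∧ b.ncard = n}

/-- `[H]^λ`: the subsets of `H` of cardinality `λ`. -/
def sizeC (H : Set Ordinal.{0}) (lam : Cardinal.{0}) : Set (Set Ordinal.{0}) :=
  {A | A ⊆ H ∧ #A = Cardinal.lift.{1,0} lam}

/-- uniform n-dimensional Δ-system with explicit witnesses. -/
def IsUnifDeltaSysWith (H : Set Ordinal.{0}) (n : ℕ) (u : Set Ordinal.{0} → Set Ordinal.{0})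
    (ρ : Ordinal.{0}) (r : Set Ordinal.{0} → Set Ordinal.{0}) : Prop :=
  (∀ m ⊆ Set.Iio (n : Ordinal.{0}), r m ⊆ Set.Iio ρ) ∧
  (∀ b ∈ sizeN H n, otp (u b) = ρ) ∧
  (∀ m ⊆ Set.Iio (n : Ordinal.{0}), ∀ a ∈ sizeN H n, ∀ b ∈ sizeN H n,
    Aligned a b → idx a b = m →
    Aligned (u a) (u b) ∧ idx (u a) (u b) = r m) ∧
  (∀ m₀ ⊆ Set.Iio (n : Ordinal.{0}), ∀ m₁ ⊆ Set.Iio (n : Ordinal.{0}),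
    r (m₀ ∩ m₁) = r m₀ ∩ r m₁)

def IsUnifDeltaSys (H : Set Ordinal.{0}) (n : ℕ) (u : Set Ordinal.{0} → Set Ordinal.{0}) : Prop :=
  ∃ ρ r, IsUnifDeltaSysWith H n u ρ r

/-- (not necessarily uniform) n-dimensional Δ-system. -/
def IsDeltaSys (H : Set Ordinal.{0}) (n : ℕ) (u : Set Ordinal.{0} → Set Ordinal.{0}) : Prop :=
  ∃ R : Set Ordinal.{0} → Set Ordinal.{0} → Set Ordinal.{0},
    ∀ m ⊆ Set.Iio (n : Ordinal.{0}), ∀ b ∈ sizeN H n, ∀ b' ∈ sizeN H n,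
      Aligned b b' → idx b b' = m → u b ∩ u b' = R m (b ∩ b')

/-- `σ(λ, n+1)` in the paper's notation (so indices shift by one). -/
noncomputable def sigmaC (lam : Cardinal.{0}) : ℕ → Cardinal.{0}
  | 0 => lam
  | n + 1 => Order.succ ((2 : Cardinal.{0}) ^< sigmaC lam n)

/-- `μ → (λ)^n_ν`. -/
def PartitionRel (μ lam ν : Cardinal.{0}) (n : ℕ) : Prop :=
  ∀ c : Set Ordinal.{0} → Ordinal.{0},
    (∀ b ∈ sizeN (Set.Iio μ.ord) n, c b < ν.ord) →
    ∃ H ∈ sizeC (Set.Iio μ.ord) lam, ∃ k, ∀ b ∈ sizeN H n, c b = k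

noncomputable def tpInt (a b : Set Ordinal.{0}) : Set (Ordinal.{0} × Ordinal.{0}) :=
  {p | p.1 < otp a ∧ p.2 < otp b ∧ nth a p.1 = nth b p.2}

def AlignedAbove (a b : Set Ordinal.{0}) (i : Ordinal.{0}) : Prop :=
  Aligned (img a (Set.Ico i (otp a))) (img b (Set.Ico i (otp b)))

def MPossible (a : Set Ordinal.{0}) (m : ℕ) (α : Ordinal.{0}) : Prop :=
  (0 < m → nth a ((m - 1 : ℕ) : Ordinal.{0}) < α) ∧
  (((m + 1 : ℕ) : Ordinal.{0}) < otp a → α < nth a ((m + 1 : ℕ) : Ordinal.{0}))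

noncomputable def replaceNth (a : Set Ordinal.{0}) (m : ℕ) (α : Ordinal.{0}) : Set Ordinal.{0} :=
  (a \ {nth a (m : Ordinal.{0})}) ∪ {α}

def MoreoverClause (H : Set Ordinal.{0}) (n : ℕ) (u : Set Ordinal.{0} → Set Ordinal.{0}) : Prop :=
  ∀ a ∈ sizeN H n, ∀ b ∈ sizeN H n, ∀ m : ℕ, m < n →
    AlignedAbove a b (m : Ordinal.{0}) → nth a (m : Ordinal.{0}) = nth b (m : Ordinal.{0}) →
    ∀ α ∈ H, MPossible a m α → MPossible b m α →
      tpInt (u a) (u b) = tpInt (u (replaceNth a m α)) (u (replaceNth b m α))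

lemma Ordinal.eq_and_eq_of_mul_add_eq {γ q q' r r' : Ordinal} (hr : r < γ) (hr' : r' < γ)
    (h : γ * q + r = γ * q' + r') : q = q' ∧ r = r' := by
  have hγ : γ ≠ 0 := (zero_le.trans_lt hr).ne'
  constructor
  · simpa [Ordinal.mul_add_div _ hγ, Ordinal.div_eq_zero_of_lt hr,
      Ordinal.div_eq_zero_of_lt hr'] using congrArg (· / γ) h
  · simpa [Ordinal.mul_add_mod_self, Ordinal.mod_eq_of_lt hr, Ordinal.mod_eq_of_lt hr'] using
      congrArg (· % γ) h

lemma otp_eq_of_orderIso {s : Set Ordinal.{0}} {o : Ordinal.{0}} (e : s ≃o Iio o) : otp s = o := by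
  have huniq : {o' | Nonempty (s ≃o Iio o')} = {o} := by
    ext o'
    refine ⟨fun ⟨e'⟩ => ?_, fun h => h ▸ ⟨e⟩⟩
    simpa using (e'.symm.trans e).toRelIsoLT.ordinalType_congr
  rw [otp, huniq, csInf_singleton]

open Ordinal in
lemma otp_eq_ncard {s : Set Ordinal.{0}} (hs : s.Finite) : otp s = s.ncard := by
  have : Fintype s := hs.fintype
  have htype : typeLT s = typeLT (Iio (s.ncard : Ordinal.{0})) := by
    rw [Ordinal.type_fintype, Ordinal.type_lt_Iio, ← Nat.card_eq_fintype_card,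
      Nat.card_coe_set_eq]
    simp
  obtain ⟨e⟩ := Ordinal.type_eq.mp htype
  exact otp_eq_of_orderIso (OrderIso.ofRelIsoLT e)

open Function

lemma sizeN_mono {H H' : Set Ordinal.{0}} (h : H ⊆ H') (n : ℕ) : sizeN H n ⊆ sizeN H' n :=
  fun _ hb => ⟨hb.1.trans h, hb.2⟩

lemma exists_eq_pair_of_mem_sizeN_two {H b : Set Ordinal.{0}} (hb : b ∈ sizeN H 2) :
    ∃ α β, α < β ∧ α ∈ H ∧ β ∈ H ∧ b = {α, β} := by
  obtain ⟨x, y, hxy, rfl⟩ := Set.ncard_eq_two.mp hb.2.2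
  rcases hxy.lt_or_gt with h | h
  · exact ⟨x, y, h, hb.1 (by simp), hb.1 (by simp), rfl⟩
  · exact ⟨y, x, h, hb.1 (by simp), hb.1 (by simp), Set.pair_comm x y⟩

lemma IsUnifDeltaSys.otp_eq {H : Set Ordinal.{0}} {n : ℕ} {u : Set Ordinal.{0} → Set Ordinal.{0}}
    (hu : IsUnifDeltaSys H n u) {a b : Set Ordinal.{0}} (ha : a ∈ sizeN H n) (hb : b ∈ sizeN H n) :
    otp (u a) = otp (u b) := by
  obtain ⟨ρ, r, -, hotp, -⟩ := hu
  rw [hotp a ha, hotp b hb]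

lemma isDeltaSys_of_pairwise_disjoint {H : Set Ordinal.{0}} {n : ℕ}
    {u : Set Ordinal.{0} → Set Ordinal.{0}} (hu : (sizeN H n).Pairwise (Disjoint on u)) :
    IsDeltaSys H n u := by
  refine ⟨fun _ s => if s.ncard = n then u s else ∅, fun m _ b hb b' hb' _ _ => ?_⟩
  by_cases hbb : b = b'
  · subst hbb
    simp [hb.2.2]
  · have hinter : (b ∩ b').ncard ≠ n := fun h => hbb <|
      (Set.eq_of_subset_of_ncard_le Set.inter_subset_left (by rw [h, hb.2.2]) hb.2.1).symm.trans
        (Set.eq_of_subset_of_ncard_le Set.inter_subset_right (by rw [h, hb'.2.2]) hb'.2.1)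
    dsimp only
    rw [if_neg hinter]
    exact (hu hb hb' hbb).inter_eq

def pairCode (Λ : Ordinal.{0}) (b : Set Ordinal.{0}) : Ordinal.{0} := Λ * sSup b + sInf b

lemma pairCode_pair {Λ α β : Ordinal.{0}} (h : α < β) : pairCode Λ {α, β} = Λ * β + α := by
  rw [pairCode, csSup_pair, csInf_pair, sup_eq_right.mpr h.le, inf_eq_left.mpr h.le]

lemma pairCode_injOn (Λ : Ordinal.{0}) : (sizeN (Iio Λ) 2).InjOn (pairCode Λ) := by
  intro b hb b' hb' h
  obtain ⟨α, β, hαβ, hα, -, rfl⟩ := exists_eq_pair_of_mem_sizeN_two hb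
  obtain ⟨α', β', hαβ', hα', -, rfl⟩ := exists_eq_pair_of_mem_sizeN_two hb'
  rw [pairCode_pair hαβ, pairCode_pair hαβ'] at h
  obtain ⟨rfl, rfl⟩ := Ordinal.eq_and_eq_of_mul_add_eq hα hα' h
  rfl

def colorFamily (Λ : Ordinal.{0}) (c : Set Ordinal.{0} → Ordinal.{0}) (b : Set Ordinal.{0}) :
    Set Ordinal.{0} :=
  if c b = 1 then {2 * pairCode Λ b, 2 * pairCode Λ b + 1} else {2 * pairCode Λ b}

section ColorFamily

variable {Λ : Ordinal.{0}} {c : Set Ordinal.{0} → Ordinal.{0}} {b : Set Ordinal.{0}}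

lemma colorFamily_finite : (colorFamily Λ c b).Finite := by
  unfold colorFamily
  split_ifs <;> simp

lemma otp_colorFamily_of_eq_one (h : c b = 1) : otp (colorFamily Λ c b) = 2 := by
  rw [otp_eq_ncard colorFamily_finite, colorFamily, if_pos h,
    Set.ncard_pair (lt_add_one _).ne, Nat.cast_ofNat]

lemma otp_colorFamily_of_ne_one (h : c b ≠ 1) : otp (colorFamily Λ c b) = 1 := by
  rw [otp_eq_ncard colorFamily_finite, colorFamily, if_neg h, Set.ncard_singleton, Nat.cast_one]

lemma exists_eq_two_mul_pairCode_add_of_mem_colorFamily {x : Ordinal.{0}}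
    (hx : x ∈ colorFamily Λ c b) : ∃ i < 2, x = 2 * pairCode Λ b + i := by
  unfold colorFamily at hx
  split_ifs at hx with h
  · rcases hx with rfl | rfl
    · exact ⟨0, by simp, by simp⟩
    · exact ⟨1, by simp, rfl⟩
  · exact ⟨0, by simp, by simpa using hx⟩

lemma colorFamily_pairwise_disjoint (Λ : Ordinal.{0}) (c : Set Ordinal.{0} → Ordinal.{0}) :
    (sizeN (Iio Λ) 2).Pairwise (Disjoint on colorFamily Λ c) := by
  intro b hb b' hb' hne
  refine Set.disjoint_left.mpr fun x hx hx' => hne (pairCode_injOn Λ hb hb' ?_)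
  obtain ⟨i, hi, rfl⟩ := exists_eq_two_mul_pairCode_add_of_mem_colorFamily hx
  obtain ⟨j, hj, hij⟩ := exists_eq_two_mul_pairCode_add_of_mem_colorFamily hx'
  exact (Ordinal.eq_and_eq_of_mul_add_eq hi hj hij).1

end ColorFamily

theorem stmt3_general (lam : Cardinal.{0})
    (hnwc : ¬ PartitionRel lam lam 2 2) :
    ∃ u : Set Ordinal.{0} → Set Ordinal.{0},
      (∀ b ∈ sizeN (Set.Iio lam.ord) 2, (u b).Finite) ∧
      IsDeltaSys (Set.Iio lam.ord) 2 u ∧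
      ∀ H ∈ sizeC (Set.Iio lam.ord) lam, ¬ IsUnifDeltaSys H 2 u := by
  simp only [PartitionRel, not_forall, not_exists, not_and, exists_prop] at hnwc
  obtain ⟨c, hc2, hcnc⟩ := hnwc
  refine ⟨colorFamily lam.ord c, fun _ _ => colorFamily_finite,
    isDeltaSys_of_pairwise_disjoint (colorFamily_pairwise_disjoint _ c), ?_⟩
  intro H hH hunif
  obtain ⟨b₀, hb₀, hc₀_ne⟩ := hcnc H hH 0
  obtain ⟨b₁, hb₁, hc₁⟩ := hcnc H hH 1
  have hc₀ : c b₀ = 1 := by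
    have h2 := hc2 b₀ (sizeN_mono hH.1 2 hb₀)
    rw [Cardinal.ord_ofNat, Order.lt_two_iff] at h2
    exact (Order.le_one_iff.mp h2).resolve_left hc₀_ne
  have h21 := hunif.otp_eq hb₀ hb₁
  rw [otp_colorFamily_of_eq_one hc₀, otp_colorFamily_of_ne_one hc₁] at h21
  exact one_lt_two.ne' h21

/-- Remark 2.9: if `λ` is regular, uncountable, and not weakly compact
(`λ ↛ (λ)²₂`), then there is a 2-dimensional Δ-system `⟨u_b : b ∈ [λ]²⟩` of finite
sets of ordinals such that no `H ∈ [λ]^λ` makes `⟨u_b : b ∈ [H]²⟩` a *uniform*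
2-dimensional Δ-system. -/
theorem stmt3 (lam : Cardinal.{0}) (hreg : lam.IsRegular) (hunc : ℵ₀ < lam)
    (hnwc : ¬ PartitionRel lam lam 2 2) :
    ∃ u : Set Ordinal.{0} → Set Ordinal.{0},
      (∀ b ∈ sizeN (Set.Iio lam.ord) 2, (u b).Finite) ∧
      IsDeltaSys (Set.Iio lam.ord) 2 u ∧
      ∀ H ∈ sizeC (Set.Iio lam.ord) lam, ¬ IsUnifDeltaSys H 2 u :=
  stmt3_general lam hnwc

end
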